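/- Let P be a path graph on m vertices with m ≥ α, and let α ≥ 1 and β ≥ 2α + 1 be integers. Then there exists an (α, β)-independent set of P: a set I of vertices of P such that (i) I is an independent set containing neither endpoint of P, and (ii) every connected component of P minus I has between α and β vertices. -/

import Mathlib

/-!
Cut the path (vertices `0, …, m - 1`) at the vertices `k(α+1) - 1`, `k = 1, 2, …`, as long as at
least `α` vertices remain after the cut. Consecutive cuts are `α + 1 ≥ 2` apart, so they are
independent, and neither endpoint is cut. Every block before the last cut has exactly `α`
vertices; the final block has at least `α` by the stopping rule and at most `2α < β` because no
further cut fitted.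
-/

open SimpleGraph

section PathGraph

variable {m : ℕ} {S : Set (Fin m)}

theorem pathGraph_induce_reachable_of_forall_notMem {u v : ↥Sᶜ} (huv : u.1 ≤ v.1)
    (h : ∀ x : Fin m, u.1 ≤ x → x ≤ v.1 → x ∉ S) :
    ((pathGraph m).induce Sᶜ).Reachable u v := by
  obtain ⟨n, hn⟩ : ∃ n, (v.1 : ℕ) = u.1 + n := ⟨v.1 - u.1, by omega⟩
  induction n generalizing v with
  | zero => rw [show u = v from Subtype.ext (Fin.ext (by omega))]
  | succ n ih =>
    obtain ⟨w, hwv⟩ : ∃ w : Fin m, (w : ℕ) + 1 = v.1 :=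
      ⟨⟨v.1 - 1, by omega⟩, Nat.sub_add_cancel (by omega)⟩
    have hwv' : w ≤ v.1 := Fin.le_def.2 (by omega)
    have hw : w ∈ Sᶜ := h w (Fin.le_def.2 (by omega)) hwv'
    have huw : u.1 ≤ w := Fin.le_def.2 (by omega)
    refine (ih (v := ⟨w, hw⟩) huw (fun x hux hxw => h x hux (hxw.trans hwv'))
      (show (w : ℕ) = u.1 + n by omega)).trans ?_
    exact Adj.reachable (pathGraph_adj.2 (Or.inl hwv))

/-- A walk avoiding `S` moves in steps of one, so it never crosses a point of `S`. -/
theorem pathGraph_induce_reachable_iff {u v : ↥Sᶜ} :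
    ((pathGraph m).induce Sᶜ).Reachable u v ↔ ∀ x ∈ S, (x < u.1 ↔ x < v.1) := by
  constructor
  · intro h x hx
    rw [reachable_iff_reflTransGen] at h
    induction h with
    | refl => rfl
    | @tail b c _ hbc ih =>
      have hb : x ≠ b.1 := fun e => b.2 (e ▸ hx)
      have hc : x ≠ c.1 := fun e => c.2 (e ▸ hx)
      rw [ih, Fin.lt_def, Fin.lt_def]
      rw [Ne, Fin.ext_iff] at hb hc
      rcases pathGraph_adj.1 (show (pathGraph m).Adj b.1 c.1 from hbc) with e | e <;> omega
  · intro h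
    wlog huv : u.1 ≤ v.1 generalizing u v
    · exact (this (fun x hx => (h x hx).symm) (le_of_not_ge huv)).symm
    refine pathGraph_induce_reachable_of_forall_notMem huv fun x hux hxv hx => ?_
    have hu : x ≠ u.1 := fun e => u.2 (e ▸ hx)
    have hv : x ≠ v.1 := fun e => v.2 (e ▸ hx)
    exact absurd ((h x hx).2 (lt_of_le_of_ne hxv hv)) (not_lt.2 hux)

end PathGraph

namespace AlphaBetaIndependentSet

def numCuts (m α : ℕ) : ℕ := (m - α) / (α + 1)

def cuts (m α : ℕ) : Set ℕ := {x | ∃ k, 0 < k ∧ k ≤ numCuts m α ∧ x + 1 = k * (α + 1)}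

def blockIndex (m α x : ℕ) : ℕ := min (x / (α + 1)) (numCuts m α)

def block (m α j : ℕ) : Set ℕ := {x | x < m ∧ x ∉ cuts m α ∧ blockIndex m α x = j}

variable {m α : ℕ}

theorem numCuts_mul_add_le (hm : α ≤ m) : numCuts m α * (α + 1) + α ≤ m := by
  have := Nat.div_mul_le_self (m - α) (α + 1)
  rw [numCuts]
  omega

theorem le_numCuts_mul_add : m ≤ numCuts m α * (α + 1) + 2 * α := by
  have h := Nat.div_add_mod (m - α) (α + 1)
  have := Nat.mod_lt (m - α) (α.add_one_pos)
  rw [numCuts, Nat.mul_comm]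
  omega

theorem le_blockIndex_iff {k x : ℕ} (hk : k ≤ numCuts m α) :
    k ≤ blockIndex m α x ↔ k * (α + 1) ≤ x := by
  rw [blockIndex, le_min_iff, Nat.le_div_iff_mul_le (α.add_one_pos)]
  exact and_iff_left hk

theorem blockIndex_le_numCuts (x : ℕ) : blockIndex m α x ≤ numCuts m α := min_le_right _ _

theorem blockIndex_le_of_forall_cuts {x x' : ℕ} (h : ∀ y ∈ cuts m α, y < x' → y < x) :
    blockIndex m α x' ≤ blockIndex m α x := by
  set k := blockIndex m α x'
  have hk : k ≤ numCuts m α := blockIndex_le_numCuts x'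
  rcases Nat.eq_zero_or_pos k with hk0 | hk0
  · omega
  have hy : k * (α + 1) - 1 + 1 = k * (α + 1) := Nat.sub_add_cancel (Nat.mul_pos hk0 α.add_one_pos)
  have hx' : k * (α + 1) ≤ x' := (le_blockIndex_iff hk).1 le_rfl
  refine (le_blockIndex_iff hk).2 ?_
  have := h _ ⟨k, hk0, hk, hy⟩ (by omega)
  omega

theorem forall_cuts_lt_iff {x x' : ℕ} :
    (∀ y ∈ cuts m α, y < x ↔ y < x') ↔ blockIndex m α x = blockIndex m α x' := by
  refine ⟨fun h => le_antisymm (blockIndex_le_of_forall_cuts fun y hy => (h y hy).1)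
    (blockIndex_le_of_forall_cuts fun y hy => (h y hy).2), fun h y ⟨k, _, hk, hy⟩ => ?_⟩
  rw [Nat.lt_iff_add_one_le, Nat.lt_iff_add_one_le, hy, ← le_blockIndex_iff hk,
    ← le_blockIndex_iff hk, h]

theorem add_one_notMem_cuts (hα : 1 ≤ α) {x : ℕ} (hx : x ∈ cuts m α) : x + 1 ∉ cuts m α := by
  rintro ⟨k, -, -, hk⟩
  obtain ⟨l, -, -, hl⟩ := hx
  have : α + 1 ∣ 1 := (Nat.dvd_add_right (Dvd.intro_left l hl.symm)).1 (Dvd.intro_left k hk.symm)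
  have := Nat.le_of_dvd one_pos this
  omega

theorem zero_notMem_cuts (hα : 1 ≤ α) : 0 ∉ cuts m α := by
  rintro ⟨k, hk, -, h⟩
  nlinarith

theorem add_le_of_mem_cuts (hm : α ≤ m) {x : ℕ} (hx : x ∈ cuts m α) : x + 1 + α ≤ m := by
  obtain ⟨k, -, hk, h⟩ := hx
  have := Nat.mul_le_mul_right (α + 1) hk
  have := numCuts_mul_add_le hm
  omega

theorem block_eq_Ico_of_lt {j : ℕ} (hm : α ≤ m) (hj : j < numCuts m α) :
    block m α j = Set.Ico (j * (α + 1)) (j * (α + 1) + α) := by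
  have hjt : (j + 1) * (α + 1) ≤ numCuts m α * (α + 1) := Nat.mul_le_mul_right _ hj
  have := numCuts_mul_add_le hm
  have hblock {x : ℕ} : blockIndex m α x = j ↔ x / (α + 1) = j := by
    rw [blockIndex]
    omega
  ext x
  simp only [block, Set.mem_ofPred_eq, Set.mem_Ico, hblock, Nat.div_eq_iff (α.add_one_pos)]
  constructor
  · rintro ⟨-, hx, hjx, hxj⟩
    refine ⟨hjx, lt_of_le_of_ne (by omega) fun e => hx ⟨j + 1, j.succ_pos, hj, ?_⟩⟩
    rw [e]; ring
  · rintro ⟨hjx, hxj⟩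
    refine ⟨by nlinarith, fun ⟨k, _, hk, hx⟩ => ?_, hjx, by omega⟩
    rcases le_or_gt k j with hkj | hjk
    · have := Nat.mul_le_mul_right (α + 1) hkj
      omega
    · have := Nat.mul_le_mul_right (α + 1) hjk
      rw [Nat.succ_mul] at this
      omega

theorem block_numCuts :
    block m α (numCuts m α) = Set.Ico (numCuts m α * (α + 1)) m := by
  ext x
  simp only [block, Set.mem_ofPred_eq, Set.mem_Ico, le_antisymm_iff (b := numCuts m α),
    blockIndex_le_numCuts, true_and, le_blockIndex_iff le_rfl]
  refine ⟨fun ⟨hxm, _, hx⟩ => ⟨hx, hxm⟩, fun ⟨hx, hxm⟩ => ⟨hxm, fun ⟨k, _, hk, hy⟩ => ?_, hx⟩⟩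
  have := Nat.mul_le_mul_right (α + 1) hk
  omega

theorem exists_ncard_supp_eq_ncard_block
    (c : ((pathGraph m).induce (Fin.val ⁻¹' cuts m α)ᶜ).ConnectedComponent) :
    ∃ j ≤ numCuts m α, c.supp.ncard = (block m α j).ncard := by
  induction c using ConnectedComponent.ind with | h v => ?_
  refine ⟨blockIndex m α v.1, blockIndex_le_numCuts _, ?_⟩
  have hreach (u : ↥(Fin.val ⁻¹' cuts m α)ᶜ) :
      ((pathGraph m).induce _).Reachable u v ↔ blockIndex m α u.1 = blockIndex m α v.1 := by
    rw [pathGraph_induce_reachable_iff, ← forall_cuts_lt_iff]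
    refine ⟨fun h y hy => ?_, fun h x hx => h x hx⟩
    by_cases hym : y < m
    · exact h ⟨y, hym⟩ hy
    · omega
  have himage : (fun u : ↥(Fin.val ⁻¹' cuts m α)ᶜ => (u.1 : ℕ)) ''
      (((pathGraph m).induce _).connectedComponentMk v).supp = block m α (blockIndex m α v.1) := by
    ext x
    simp only [Set.mem_image, ConnectedComponent.mem_supp_iff, ConnectedComponent.eq, hreach]
    exact ⟨fun ⟨u, hu, hx⟩ => hx ▸ ⟨u.1.2, u.2, hu⟩,
      fun ⟨hxm, hx, hxv⟩ => ⟨⟨⟨x, hxm⟩, hx⟩, hxv, rfl⟩⟩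
  rw [← himage]
  exact (Set.ncard_image_of_injective _ (Fin.val_injective.comp Subtype.val_injective)).symm

end AlphaBetaIndependentSet

open AlphaBetaIndependentSet

/-- Every path on `m ≥ α` vertices admits an `(α, β)`-independent set when
`α ≥ 1` and `β ≥ 2α + 1`: an independent set avoiding both endpoints such that
every component of the path minus the set has between `α` and `β` vertices. -/
theorem stmt_4 (m α β : ℕ) (hα : 1 ≤ α) (hβ : 2 * α + 1 ≤ β) (hm : α ≤ m) :
    ∃ I : Set (Fin m),
      (∀ u ∈ I, ∀ v ∈ I, ¬ (SimpleGraph.pathGraph m).Adj u v) ∧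
      (∀ v ∈ I, (v : ℕ) ≠ 0 ∧ (v : ℕ) ≠ m - 1) ∧
      (∀ c : ((SimpleGraph.pathGraph m).induce Iᶜ).ConnectedComponent,
        α ≤ c.supp.ncard ∧ c.supp.ncard ≤ β) := by
  refine ⟨Fin.val ⁻¹' cuts m α, fun u hu v hv hadj => ?_, fun v hv => ?_, fun c => ?_⟩
  · rcases pathGraph_adj.1 hadj with e | e
    · exact add_one_notMem_cuts hα hu (e ▸ hv)
    · exact add_one_notMem_cuts hα hv (e ▸ hu)
  · have hv : (v : ℕ) ∈ cuts m α := hv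
    have := add_le_of_mem_cuts hm hv
    exact ⟨fun h => zero_notMem_cuts hα (h ▸ hv), by omega⟩
  · obtain ⟨j, hj, hc⟩ := exists_ncard_supp_eq_ncard_block c
    rw [hc]
    rcases hj.lt_or_eq with hj | rfl
    · rw [block_eq_Ico_of_lt hm hj, Set.ncard_Ico_nat]
      omega
    · have := numCuts_mul_add_le hm
      have := le_numCuts_mul_add (m := m) (α := α)
      rw [block_numCuts, Set.ncard_Ico_nat]
      omega
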